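/- arXiv:1310.8504 — 3 statements merged into one kernel-verified Lean document; each statement's English description precedes it below -/
import Mathlib

section
/- Let Ȧ₁ and Ȧ₂ be densely defined closed symmetric operators with deficiency indices (1,1) on complex Hilbert spaces H₁ and H₂, let g±ᵏ ∈ ker((Ȧₖ)* ∓ i) be unit vectors, k = 1,2, let α, β ∈ [0, π), and let Ȧ be the restriction of (Ȧ₁ ⊕ Ȧ₂)* to Dom(Ȧ₁) ⊕ Dom(Ȧ₂) ∔ span{(sin α g₊¹ − sin β g₋¹) ⊕ (cos α g₊² − cos β g₋²)}. Then Ȧ is a symmetric operator with deficiency indices (1,1), its deficiency subspaces are ker(Ȧ* − i) = span{G₊} and ker(Ȧ* + i) = span{G₋}, where G₊ = cos α g₊¹ − sin α g₊² and G₋ = cos β g₋¹ − sin β g₋², and ‖G₊‖ = ‖G₋‖ = 1. -/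
noncomputable section

open Complex

/-- The inner product, linear in the **first** argument (the convention of the paper). -/
def ip {H : Type*} [NormedAddCommGroup H] [InnerProductSpace ℂ H] (x y : H) : ℂ :=
  @inner ℂ H _ y x

variable {H H₁ H₂ : Type*}
  [NormedAddCommGroup H] [InnerProductSpace ℂ H] [CompleteSpace H]
  [NormedAddCommGroup H₁] [InnerProductSpace ℂ H₁] [CompleteSpace H₁]
  [NormedAddCommGroup H₂] [InnerProductSpace ℂ H₂] [CompleteSpace H₂]

/-- The deficiency subspace `ker (T* - z)` of a densely defined operator `T`,
as a subset of the ambient space. -/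
def defSet (T : H →ₗ.[ℂ] H) (z : ℂ) : Set H :=
  {g | ∃ hg : g ∈ T.adjoint.domain, T.adjoint ⟨g, hg⟩ = z • g}

/-- `g` is a nonzero vector spanning the deficiency subspace `ker (T* - z)`. -/
def SpansDefSet (T : H →ₗ.[ℂ] H) (z : ℂ) (g : H) : Prop :=
  g ≠ 0 ∧ defSet T z = {h | ∃ c : ℂ, h = c • g}

/-- `T` has deficiency indices `(1,1)`. -/
def HasDefIndicesOneOne (T : H →ₗ.[ℂ] H) : Prop :=
  (∃ g, SpansDefSet T I g) ∧ (∃ g, SpansDefSet T (-I) g)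

/-- A partially defined operator is symmetric. -/
def IsSymmetricOp (T : H →ₗ.[ℂ] H) : Prop :=
  ∀ x y : T.domain, ip (T x) (y : H) = ip (x : H) (T y)

/-- A partially defined operator is self-adjoint. -/
def IsSelfAdjointOp (T : H →ₗ.[ℂ] H) : Prop :=
  Dense (T.domain : Set H) ∧ T.adjoint = T

/-- A partially defined operator is dissipative: `Im ⟨T x, x⟩ ≥ 0`. -/
def IsDissipativeOp (T : H →ₗ.[ℂ] H) : Prop :=
  ∀ x : T.domain, 0 ≤ (ip (T x) (x : H)).im

/-- A partially defined operator is maximal dissipative: it is dissipative and admits no proper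
dissipative extension. -/
def IsMaximalDissipativeOp (T : H →ₗ.[ℂ] H) : Prop :=
  IsDissipativeOp T ∧ ∀ S : H →ₗ.[ℂ] H, IsDissipativeOp S → T ≤ S → S = T

/-- The domain of the direct (orthogonal) sum of two partially defined operators. -/
def prodDomain (T₁ : H₁ →ₗ.[ℂ] H₁) (T₂ : H₂ →ₗ.[ℂ] H₂) :
    Submodule ℂ (WithLp 2 (H₁ × H₂)) where
  carrier := {x | x.fst ∈ T₁.domain ∧ x.snd ∈ T₂.domain}
  add_mem' := fun ha hb => ⟨Submodule.add_mem _ ha.1 hb.1, Submodule.add_mem _ ha.2 hb.2⟩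
  zero_mem' := ⟨Submodule.zero_mem _, Submodule.zero_mem _⟩
  smul_mem' := fun c x hx => ⟨Submodule.smul_mem _ c hx.1, Submodule.smul_mem _ c hx.2⟩

/-- First-component projection of the domain of a direct sum. -/
def fstD (T₁ : H₁ →ₗ.[ℂ] H₁) (T₂ : H₂ →ₗ.[ℂ] H₂) :
    ↥(prodDomain T₁ T₂) →ₗ[ℂ] T₁.domain where
  toFun x := ⟨x.val.fst, x.prop.1⟩
  map_add' _ _ := rfl
  map_smul' _ _ := rfl

/-- Second-component projection of the domain of a direct sum. -/
def sndD (T₁ : H₁ →ₗ.[ℂ] H₁) (T₂ : H₂ →ₗ.[ℂ] H₂) :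
    ↥(prodDomain T₁ T₂) →ₗ[ℂ] T₂.domain where
  toFun x := ⟨x.val.snd, x.prop.2⟩
  map_add' _ _ := rfl
  map_smul' _ _ := rfl

/-- The direct (orthogonal) sum `T₁ ⊕ T₂` of two partially defined operators, acting
componentwise on `Dom T₁ ⊕ Dom T₂ ⊆ H₁ ⊕ H₂`. -/
def prodOp (T₁ : H₁ →ₗ.[ℂ] H₁) (T₂ : H₂ →ₗ.[ℂ] H₂) :
    WithLp 2 (H₁ × H₂) →ₗ.[ℂ] WithLp 2 (H₁ × H₂) where
  domain := prodDomain T₁ T₂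
  toFun := (WithLp.linearEquiv 2 ℂ (H₁ × H₂)).symm.toLinearMap ∘ₗ
    ((T₁.toFun ∘ₗ fstD T₁ T₂).prod (T₂.toFun ∘ₗ sndD T₁ T₂))

/-- The canonical embedding of `H₁` into `H₁ ⊕ H₂`. -/
def embFst (x : H₁) : WithLp 2 (H₁ × H₂) := (WithLp.equiv 2 (H₁ × H₂)).symm (x, 0)

/-- Builds an element of `H₁ ⊕ H₂` from components. -/
def pairL2 (x : H₁) (y : H₂) : WithLp 2 (H₁ × H₂) := (WithLp.equiv 2 (H₁ × H₂)).symm (x, y)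

/-!
The adjoint of `T = Ȧ₁ ⊕ Ȧ₂` is `Ȧ₁* ⊕ Ȧ₂*`, so its deficiency spaces `N_{±i}` are the planes
spanned by `(g±¹, 0)` and `(0, g±²)`. The vector `f = f₊ − f₋`, with
`f₊ = (sin α g₊¹, cos α g₊²) ∈ N_i` and `f₋ = (sin β g₋¹, cos β g₋²) ∈ N_{-i}`, satisfies
`T* f = i (f₊ + f₋)`, and `⟪T* f, f⟫` is real exactly because `‖f₊‖ = ‖f₋‖`; this is what keeps the
restriction of `T*` to `Dom T ∔ span {f}` symmetric. Testing the adjoint equation of the restriction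
against `f` adds to `g ∈ N_{±i}` the single condition `⟪g, f±⟫ = 0`, which cuts each plane down to
the line orthogonal to `f±`, spanned by `G±`.
-/

open ComplexConjugate

local notation "⟪" x ", " y "⟫" => @inner ℂ _ _ x y

theorem isSymmetricOp_iff_isFormalAdjoint {E : Type*} [NormedAddCommGroup E]
    [InnerProductSpace ℂ E] {T : E →ₗ.[ℂ] E} :
    IsSymmetricOp T ↔ T.IsFormalAdjoint T :=
  ⟨fun h x y => (h y x).symm, fun h x y => (h y x).symm⟩

theorem exists_adjoint_eq_iff {T : H →ₗ.[ℂ] H} (hT : Dense (T.domain : Set H)) (y w : H) :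
    (∃ hy : y ∈ T.adjoint.domain, T.adjoint ⟨y, hy⟩ = w) ↔
      ∀ x : T.domain, ⟪w, (x : H)⟫ = ⟪y, T x⟫ := by
  refine ⟨fun ⟨hy, hw⟩ x => hw ▸ LinearPMap.adjoint_isFormalAdjoint hT ⟨y, hy⟩ x, fun h => ?_⟩
  have hy : y ∈ T.adjoint.domain := LinearPMap.mem_adjoint_domain_of_exists _ ⟨w, h⟩
  exact ⟨hy, LinearPMap.adjoint_apply_eq hT _ h⟩

theorem mem_defSet_iff {T : H →ₗ.[ℂ] H} (hT : Dense (T.domain : Set H)) (z : ℂ) (g : H) :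
    g ∈ defSet T z ↔ ∀ x : T.domain, ⟪z • g, (x : H)⟫ = ⟪g, T x⟫ :=
  exists_adjoint_eq_iff hT g (z • g)

theorem SpansDefSet.of_mem {T : H →ₗ.[ℂ] H} {z : ℂ} {g h : H} (hg : SpansDefSet T z g)
    (hh : h ∈ defSet T z) (hh0 : h ≠ 0) : SpansDefSet T z h := by
  have hh' : h ∈ {h | ∃ c : ℂ, h = c • g} := hg.2 ▸ hh
  obtain ⟨c, rfl⟩ := hh'
  have hc : c ≠ 0 := by rintro rfl; simp at hh0
  refine ⟨hh0, hg.2.trans (Set.ext fun x => ⟨?_, ?_⟩)⟩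
  · rintro ⟨d, rfl⟩
    exact ⟨d / c, by rw [smul_smul, div_mul_cancel₀ _ hc]⟩
  · rintro ⟨d, rfl⟩
    exact ⟨d * c, by rw [smul_smul]⟩

section Extension

variable {T : H →ₗ.[ℂ] H}

def adjointRestrict (T : H →ₗ.[ℂ] H) (f : H) : H →ₗ.[ℂ] H :=
  T.adjoint.domRestrict (T.domain ⊔ Submodule.span ℂ {f})

theorem domain_le_adjointRestrict_domain (hT : Dense (T.domain : Set H))
    (hsym : T.IsFormalAdjoint T) (f : H) : T.domain ≤ (adjointRestrict T f).domain :=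
  fun _ hu => Submodule.mem_inf.mpr ⟨Submodule.mem_sup_left hu, (hsym.le_adjoint hT).1 hu⟩

theorem adjoint_apply_of_mem_domain (hT : Dense (T.domain : Set H))
    (hsym : T.IsFormalAdjoint T) (u : T.domain) :
    T.adjoint ⟨u, (hsym.le_adjoint hT).1 u.2⟩ = T u :=
  ((hsym.le_adjoint hT).2 rfl).symm

theorem adjointRestrict_apply_of_mem_domain (hT : Dense (T.domain : Set H))
    (hsym : T.IsFormalAdjoint T) (f : H) (u : T.domain) :
    adjointRestrict T f ⟨u, domain_le_adjointRestrict_domain hT hsym f u.2⟩ = T u :=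
  (LinearPMap.domRestrict_apply rfl).trans (adjoint_apply_of_mem_domain hT hsym u)

theorem mem_adjointRestrict_domain {f : H} (hf : f ∈ T.adjoint.domain) :
    f ∈ (adjointRestrict T f).domain :=
  Submodule.mem_inf.mpr ⟨Submodule.mem_sup_right (Submodule.mem_span_singleton_self f), hf⟩

theorem adjointRestrict_apply_self {f : H} (hf : f ∈ T.adjoint.domain) :
    adjointRestrict T f ⟨f, mem_adjointRestrict_domain hf⟩ = T.adjoint ⟨f, hf⟩ :=
  LinearPMap.domRestrict_apply rfl

theorem exists_eq_add_smul_of_mem_adjointRestrict_domain (hT : Dense (T.domain : Set H))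
    (hsym : T.IsFormalAdjoint T) {f : H} (hf : f ∈ T.adjoint.domain)
    (x : (adjointRestrict T f).domain) :
    ∃ (u : T.domain) (c : ℂ),
      (x : H) = u + c • f ∧ adjointRestrict T f x = T u + c • T.adjoint ⟨f, hf⟩ := by
  obtain ⟨hx, hx'⟩ := Submodule.mem_inf.mp x.2
  obtain ⟨u, hu, v, hv, huv⟩ := Submodule.mem_sup.mp hx
  obtain ⟨c, rfl⟩ := Submodule.mem_span_singleton.mp hv
  have hsplit : (⟨x, hx'⟩ : T.adjoint.domain) = ⟨u, (hsym.le_adjoint hT).1 hu⟩ + c • ⟨f, hf⟩ :=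
    Subtype.ext huv.symm
  refine ⟨⟨u, hu⟩, c, huv.symm, ?_⟩
  have hval : adjointRestrict T f x = T.adjoint ⟨x, hx'⟩ := LinearPMap.domRestrict_apply rfl
  rw [hval, hsplit, LinearPMap.map_add, LinearPMap.map_smul,
    adjoint_apply_of_mem_domain hT hsym ⟨u, hu⟩]

/-- Symmetry survives because the boundary form `⟪T* x, y⟫ - ⟪x, T* y⟫` vanishes on `Dom T` in
either argument, so on `Dom T ∔ span {f}` it reduces to its value at `(f, f)`. -/
theorem isFormalAdjoint_adjointRestrict (hT : Dense (T.domain : Set H))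
    (hsym : T.IsFormalAdjoint T) {f : H} (hf : f ∈ T.adjoint.domain)
    (hreal : ⟪T.adjoint ⟨f, hf⟩, f⟫ = ⟪f, T.adjoint ⟨f, hf⟩⟫) :
    (adjointRestrict T f).IsFormalAdjoint (adjointRestrict T f) := by
  have hadj : ∀ u : T.domain, ⟪T.adjoint ⟨f, hf⟩, (u : H)⟫ = ⟪f, T u⟫ :=
    LinearPMap.adjoint_isFormalAdjoint hT ⟨f, hf⟩
  intro x y
  obtain ⟨u, c, hx, hAx⟩ := exists_eq_add_smul_of_mem_adjointRestrict_domain hT hsym hf x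
  obtain ⟨v, d, hy, hAy⟩ := exists_eq_add_smul_of_mem_adjointRestrict_domain hT hsym hf y
  rw [hx, hy, hAx, hAy]
  simp only [inner_add_left, inner_add_right, inner_smul_left, inner_smul_right]
  have hadj' : ⟪T u, f⟫ = ⟪(u : H), T.adjoint ⟨f, hf⟩⟫ := by
    rw [← inner_conj_symm (u : H), hadj u, inner_conj_symm]
  rw [hsym u v, hadj v, hadj', hreal]

theorem mem_defSet_adjointRestrict_iff (hT : Dense (T.domain : Set H))
    (hsym : T.IsFormalAdjoint T) {f : H} (hf : f ∈ T.adjoint.domain) (z : ℂ) (g : H) :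
    g ∈ defSet (adjointRestrict T f) z ↔
      g ∈ defSet T z ∧ ⟪z • g, f⟫ = ⟪g, T.adjoint ⟨f, hf⟩⟫ := by
  have hdense : Dense ((adjointRestrict T f).domain : Set H) :=
    hT.mono (domain_le_adjointRestrict_domain hT hsym f)
  rw [mem_defSet_iff hdense, mem_defSet_iff hT]
  refine ⟨fun h => ⟨fun u => ?_, ?_⟩, fun ⟨h, hf'⟩ x => ?_⟩
  · rw [h ⟨u, domain_le_adjointRestrict_domain hT hsym f u.2⟩,
      adjointRestrict_apply_of_mem_domain hT hsym]
  · rw [h ⟨f, mem_adjointRestrict_domain hf⟩, adjointRestrict_apply_self]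
  · obtain ⟨u, c, hx, hAx⟩ := exists_eq_add_smul_of_mem_adjointRestrict_domain hT hsym hf x
    rw [hx, hAx, inner_add_right, inner_add_right, inner_smul_right, inner_smul_right, h u, hf']

variable {fp fm : H}

theorem exists_adjoint_sub_eq (hp : fp ∈ defSet T I) (hm : fm ∈ defSet T (-I)) :
    ∃ h : fp - fm ∈ T.adjoint.domain, T.adjoint ⟨fp - fm, h⟩ = I • (fp + fm) := by
  obtain ⟨hp, ep⟩ := hp
  obtain ⟨hm, em⟩ := hm
  refine ⟨sub_mem hp hm, ?_⟩
  rw [show (⟨fp - fm, sub_mem hp hm⟩ : T.adjoint.domain) = ⟨fp, hp⟩ - ⟨fm, hm⟩ from rfl,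
    LinearPMap.map_sub, ep, em]
  module

theorem isFormalAdjoint_adjointRestrict_sub (hT : Dense (T.domain : Set H))
    (hsym : T.IsFormalAdjoint T) (hp : fp ∈ defSet T I) (hm : fm ∈ defSet T (-I))
    (hnorm : ‖fp‖ = ‖fm‖) :
    (adjointRestrict T (fp - fm)).IsFormalAdjoint (adjointRestrict T (fp - fm)) := by
  obtain ⟨hf, hF⟩ := exists_adjoint_sub_eq hp hm
  refine isFormalAdjoint_adjointRestrict hT hsym hf ?_
  have hnorm' : ⟪fp, fp⟫ = ⟪fm, fm⟫ := by
    rw [inner_self_eq_norm_sq_to_K, inner_self_eq_norm_sq_to_K, hnorm]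
  rw [hF]
  simp only [inner_smul_left, inner_smul_right, inner_add_left, inner_add_right,
    inner_sub_left, inner_sub_right, conj_I]
  linear_combination (-2 * I) * hnorm'

theorem defSet_adjointRestrict_sub_I (hT : Dense (T.domain : Set H))
    (hsym : T.IsFormalAdjoint T) (hp : fp ∈ defSet T I) (hm : fm ∈ defSet T (-I)) :
    defSet (adjointRestrict T (fp - fm)) I = {g | g ∈ defSet T I ∧ ⟪g, fp⟫ = 0} := by
  obtain ⟨hf, hF⟩ := exists_adjoint_sub_eq hp hm
  ext g
  refine (mem_defSet_adjointRestrict_iff hT hsym hf I g).trans (and_congr_right fun _ => ?_)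
  rw [hF, inner_smul_left, inner_smul_right, inner_sub_right, inner_add_right, conj_I]
  constructor <;> intro h
  · linear_combination (I / 2) * h + ⟪g, fp⟫ * I_sq
  · linear_combination (-2 * I) * h

theorem defSet_adjointRestrict_sub_neg_I (hT : Dense (T.domain : Set H))
    (hsym : T.IsFormalAdjoint T) (hp : fp ∈ defSet T I) (hm : fm ∈ defSet T (-I)) :
    defSet (adjointRestrict T (fp - fm)) (-I) = {g | g ∈ defSet T (-I) ∧ ⟪g, fm⟫ = 0} := by
  obtain ⟨hf, hF⟩ := exists_adjoint_sub_eq hp hm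
  ext g
  refine (mem_defSet_adjointRestrict_iff hT hsym hf (-I) g).trans (and_congr_right fun _ => ?_)
  rw [hF, inner_smul_left, inner_smul_right, inner_sub_right, inner_add_right, map_neg, conj_I,
    neg_neg]
  constructor <;> intro h
  · linear_combination (I / 2) * h + ⟪g, fm⟫ * I_sq
  · linear_combination (-2 * I) * h

end Extension

section DirectSum

variable {E F : Type*} [NormedAddCommGroup E] [InnerProductSpace ℂ E]
  [NormedAddCommGroup F] [InnerProductSpace ℂ F]

theorem pairL2_smul (k : ℂ) (x : E) (y : F) : k • pairL2 x y = pairL2 (k • x) (k • y) := rfl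

theorem inner_pairL2 (x₁ y₁ : E) (x₂ y₂ : F) :
    ⟪pairL2 x₁ x₂, pairL2 y₁ y₂⟫ = ⟪x₁, y₁⟫ + ⟪x₂, y₂⟫ :=
  WithLp.prod_inner_apply _ _

theorem norm_pairL2_smul_eq_one {x : E} {y : F} (hx : ‖x‖ = 1) (hy : ‖y‖ = 1) {a b : ℂ}
    (hab : ‖a‖ ^ 2 + ‖b‖ ^ 2 = 1) : ‖pairL2 (a • x) (b • y)‖ = 1 := by
  rw [← pow_eq_one_iff_of_nonneg (norm_nonneg _) two_ne_zero, WithLp.prod_norm_sq_eq_of_L2]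
  simpa [pairL2, norm_smul, hx, hy] using hab

theorem orthogonal_pairL2_iff {x : E} {y : F} (hx : ‖x‖ = 1) (hy : ‖y‖ = 1) {s c : ℝ}
    (hsc : s ^ 2 + c ^ 2 = 1) (g : WithLp 2 (E × F)) :
    ((∃ a b : ℂ, g = pairL2 (a • x) (b • y)) ∧ ⟪g, pairL2 ((s : ℂ) • x) ((c : ℂ) • y)⟫ = 0) ↔
      ∃ k : ℂ, g = k • pairL2 ((c : ℂ) • x) (-(s : ℂ) • y) := by
  have hsc' : (s : ℂ) ^ 2 + (c : ℂ) ^ 2 = 1 := by exact_mod_cast hsc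
  have hinner : ∀ a b : ℂ, ⟪pairL2 (a • x) (b • y), pairL2 ((s : ℂ) • x) ((c : ℂ) • y)⟫ =
      conj a * s + conj b * c := by
    intro a b
    rw [inner_pairL2, inner_smul_left, inner_smul_left, inner_smul_right, inner_smul_right,
      inner_self_eq_norm_sq_to_K, inner_self_eq_norm_sq_to_K, hx, hy]
    push_cast
    ring
  constructor
  · rintro ⟨⟨a, b, rfl⟩, horth⟩
    have hab : a * s + b * c = 0 := by
      simpa using congrArg conj ((hinner a b).symm.trans horth)
    refine ⟨a * c - b * s, ?_⟩
    rw [pairL2_smul, smul_smul, smul_smul]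
    congr 2
    · linear_combination (s : ℂ) * hab - a * hsc'
    · linear_combination (c : ℂ) * hab - b * hsc'
  · rintro ⟨k, rfl⟩
    rw [pairL2_smul, smul_smul, smul_smul]
    refine ⟨⟨_, _, rfl⟩, ?_⟩
    rw [hinner]
    simp only [map_mul, map_neg, conj_ofReal]
    ring

variable {B₁ : E →ₗ.[ℂ] E} {B₂ : F →ₗ.[ℂ] F}

theorem dense_prodDomain (hd₁ : Dense (B₁.domain : Set E))
    (hd₂ : Dense (B₂.domain : Set F)) :
    Dense (prodDomain B₁ B₂ : Set (WithLp 2 (E × F))) := by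
  convert ((WithLp.prodContinuousLinearEquiv 2 ℂ E F).symm.toHomeomorph.isDenseEmbedding
    ).dense_image.mpr (hd₁.prod hd₂) using 1
  ext x
  exact ⟨fun hx => ⟨(x.fst, x.snd), hx, rfl⟩, by rintro ⟨y, hy, rfl⟩; exact hy⟩

theorem isFormalAdjoint_prodOp (h₁ : B₁.IsFormalAdjoint B₁) (h₂ : B₂.IsFormalAdjoint B₂) :
    (prodOp B₁ B₂).IsFormalAdjoint (prodOp B₁ B₂) := fun x y =>
  congrArg₂ (· + ·) (h₁ ⟨_, x.2.1⟩ ⟨_, y.2.1⟩) (h₂ ⟨_, x.2.2⟩ ⟨_, y.2.2⟩)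

theorem exists_prodOp_adjoint_eq_iff [CompleteSpace E] [CompleteSpace F]
    (hd₁ : Dense (B₁.domain : Set E)) (hd₂ : Dense (B₂.domain : Set F)) (y w : WithLp 2 (E × F)) :
    (∃ hy : y ∈ (prodOp B₁ B₂).adjoint.domain, (prodOp B₁ B₂).adjoint ⟨y, hy⟩ = w) ↔
      (∃ h₁ : y.fst ∈ B₁.adjoint.domain, B₁.adjoint ⟨y.fst, h₁⟩ = w.fst) ∧
      (∃ h₂ : y.snd ∈ B₂.adjoint.domain, B₂.adjoint ⟨y.snd, h₂⟩ = w.snd) := by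
  rw [exists_adjoint_eq_iff (T := prodOp B₁ B₂) (dense_prodDomain hd₁ hd₂),
    exists_adjoint_eq_iff hd₁, exists_adjoint_eq_iff hd₂]
  refine ⟨fun h => ⟨fun x₁ => ?_, fun x₂ => ?_⟩, fun ⟨h₁, h₂⟩ x =>
    congrArg₂ (· + ·) (h₁ ⟨_, x.2.1⟩) (h₂ ⟨_, x.2.2⟩)⟩
  · have hx₁ : ⟪w.fst, (x₁ : E)⟫ + ⟪w.snd, 0⟫ = ⟪y.fst, B₁ x₁⟫ + ⟪y.snd, B₂ 0⟫ :=
      h ⟨pairL2 (x₁ : E) 0, x₁.2, zero_mem _⟩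
    simpa using hx₁
  · have hx₂ : ⟪w.fst, 0⟫ + ⟪w.snd, (x₂ : F)⟫ = ⟪y.fst, B₁ 0⟫ + ⟪y.snd, B₂ x₂⟫ :=
      h ⟨pairL2 0 (x₂ : F), zero_mem _, x₂.2⟩
    simpa using hx₂

theorem defSet_prodOp_eq [CompleteSpace E] [CompleteSpace F]
    (hd₁ : Dense (B₁.domain : Set E)) (hd₂ : Dense (B₂.domain : Set F)) {z : ℂ} {x : E} {y : F}
    (hx : SpansDefSet B₁ z x) (hy : SpansDefSet B₂ z y) :
    defSet (prodOp B₁ B₂) z = {g | ∃ a b : ℂ, g = pairL2 (a • x) (b • y)} := by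
  ext g
  refine (exists_prodOp_adjoint_eq_iff hd₁ hd₂ g (z • g)).trans ?_
  change g.fst ∈ defSet B₁ z ∧ g.snd ∈ defSet B₂ z ↔ _
  rw [hx.2, hy.2]
  constructor
  · rintro ⟨⟨a, ha⟩, ⟨b, hb⟩⟩
    exact ⟨a, b, by rw [← ha, ← hb]; rfl⟩
  · rintro ⟨a, b, rfl⟩
    exact ⟨⟨a, rfl⟩, ⟨b, rfl⟩⟩

end DirectSum

theorem statement1_general
    (B₁ : H₁ →ₗ.[ℂ] H₁) (B₂ : H₂ →ₗ.[ℂ] H₂)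
    (hd₁ : Dense (B₁.domain : Set H₁)) (hd₂ : Dense (B₂.domain : Set H₂))
    (hs₁ : IsSymmetricOp B₁) (hs₂ : IsSymmetricOp B₂)
    (hi₁ : HasDefIndicesOneOne B₁) (hi₂ : HasDefIndicesOneOne B₂)
    (gp₁ gm₁ : H₁) (gp₂ gm₂ : H₂)
    (hgp₁ : gp₁ ∈ defSet B₁ Complex.I) (hgm₁ : gm₁ ∈ defSet B₁ (-Complex.I))
    (hgp₂ : gp₂ ∈ defSet B₂ Complex.I) (hgm₂ : gm₂ ∈ defSet B₂ (-Complex.I))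
    (hnp₁ : ‖gp₁‖ = 1) (hnm₁ : ‖gm₁‖ = 1) (hnp₂ : ‖gp₂‖ = 1) (hnm₂ : ‖gm₂‖ = 1)
    (α β : ℝ)
    (f : WithLp 2 (H₁ × H₂))
    (hf : f = pairL2 ((Real.sin α : ℂ) • gp₁ - (Real.sin β : ℂ) • gm₁)
      ((Real.cos α : ℂ) • gp₂ - (Real.cos β : ℂ) • gm₂))
    (A : WithLp 2 (H₁ × H₂) →ₗ.[ℂ] WithLp 2 (H₁ × H₂))
    (hA : A = ((prodOp B₁ B₂).adjoint).domRestrict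
      (prodDomain B₁ B₂ ⊔ Submodule.span ℂ {f}))
    (Gp Gm : WithLp 2 (H₁ × H₂))
    (hGp : Gp = pairL2 ((Real.cos α : ℂ) • gp₁) (-(Real.sin α : ℂ) • gp₂))
    (hGm : Gm = pairL2 ((Real.cos β : ℂ) • gm₁) (-(Real.sin β : ℂ) • gm₂)) :
    IsSymmetricOp A ∧ HasDefIndicesOneOne A ∧
      defSet A Complex.I = {h | ∃ c : ℂ, h = c • Gp} ∧
      defSet A (-Complex.I) = {h | ∃ c : ℂ, h = c • Gm} ∧
      ‖Gp‖ = 1 ∧ ‖Gm‖ = 1 := by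
  have hT : Dense ((prodOp B₁ B₂).domain : Set (WithLp 2 (H₁ × H₂))) :=
    dense_prodDomain hd₁ hd₂
  have hsym := isFormalAdjoint_prodOp (isSymmetricOp_iff_isFormalAdjoint.mp hs₁)
    (isSymmetricOp_iff_isFormalAdjoint.mp hs₂)
  obtain ⟨⟨_, hN₁p⟩, ⟨_, hN₁m⟩⟩ := hi₁
  obtain ⟨⟨_, hN₂p⟩, ⟨_, hN₂m⟩⟩ := hi₂
  have hNp := defSet_prodOp_eq hd₁ hd₂
    (hN₁p.of_mem hgp₁ (ne_zero_of_norm_ne_zero (hnp₁ ▸ one_ne_zero)))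
    (hN₂p.of_mem hgp₂ (ne_zero_of_norm_ne_zero (hnp₂ ▸ one_ne_zero)))
  have hNm := defSet_prodOp_eq hd₁ hd₂
    (hN₁m.of_mem hgm₁ (ne_zero_of_norm_ne_zero (hnm₁ ▸ one_ne_zero)))
    (hN₂m.of_mem hgm₂ (ne_zero_of_norm_ne_zero (hnm₂ ▸ one_ne_zero)))
  set fp := pairL2 ((Real.sin α : ℂ) • gp₁) ((Real.cos α : ℂ) • gp₂)
  set fm := pairL2 ((Real.sin β : ℂ) • gm₁) ((Real.cos β : ℂ) • gm₂)
  have hfp : fp ∈ defSet (prodOp B₁ B₂) I := hNp ▸ ⟨_, _, rfl⟩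
  have hfm : fm ∈ defSet (prodOp B₁ B₂) (-I) := hNm ▸ ⟨_, _, rfl⟩
  have hA' : A = adjointRestrict (prodOp B₁ B₂) (fp - fm) := hA.trans (by rw [hf]; rfl)
  have hunit (θ : ℝ) : ‖(Real.sin θ : ℂ)‖ ^ 2 + ‖(Real.cos θ : ℂ)‖ ^ 2 = 1 := by
    simp only [Complex.norm_real, Real.norm_eq_abs, sq_abs, Real.sin_sq_add_cos_sq]
  have hnorm : ‖fp‖ = ‖fm‖ := by
    rw [norm_pairL2_smul_eq_one hnp₁ hnp₂ (hunit α), norm_pairL2_smul_eq_one hnm₁ hnm₂ (hunit β)]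
  have hDp : defSet A I = {h | ∃ c : ℂ, h = c • Gp} := by
    rw [hA', defSet_adjointRestrict_sub_I hT hsym hfp hfm, hNp, hGp]
    exact Set.ext (orthogonal_pairL2_iff hnp₁ hnp₂ (Real.sin_sq_add_cos_sq α))
  have hDm : defSet A (-I) = {h | ∃ c : ℂ, h = c • Gm} := by
    rw [hA', defSet_adjointRestrict_sub_neg_I hT hsym hfp hfm, hNm, hGm]
    exact Set.ext (orthogonal_pairL2_iff hnm₁ hnm₂ (Real.sin_sq_add_cos_sq β))
  have hGp1 : ‖Gp‖ = 1 :=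
    hGp ▸ norm_pairL2_smul_eq_one hnp₁ hnp₂ (by rw [norm_neg, add_comm]; exact hunit α)
  have hGm1 : ‖Gm‖ = 1 :=
    hGm ▸ norm_pairL2_smul_eq_one hnm₁ hnm₂ (by rw [norm_neg, add_comm]; exact hunit β)
  refine ⟨?_, ⟨⟨Gp, ne_zero_of_norm_ne_zero (hGp1 ▸ one_ne_zero), hDp⟩,
    ⟨Gm, ne_zero_of_norm_ne_zero (hGm1 ▸ one_ne_zero), hDm⟩⟩, hDp, hDm, hGp1, hGm1⟩
  rw [isSymmetricOp_iff_isFormalAdjoint, hA']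
  exact isFormalAdjoint_adjointRestrict_sub hT hsym hfp hfm hnorm

/-- The restriction `Ȧ` of `(Ȧ₁ ⊕ Ȧ₂)*` to
`Dom(Ȧ₁) ⊕ Dom(Ȧ₂) ∔ span{(sin α g₊¹ − sin β g₋¹) ⊕ (cos α g₊² − cos β g₋²)}` is a symmetric
operator with deficiency indices `(1,1)`, its deficiency subspaces are spanned by
`G₊ = cos α g₊¹ − sin α g₊²` and `G₋ = cos β g₋¹ − sin β g₋²`, and `‖G₊‖ = ‖G₋‖ = 1`. -/
theorem statement1
    (B₁ : H₁ →ₗ.[ℂ] H₁) (B₂ : H₂ →ₗ.[ℂ] H₂)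
    (hd₁ : Dense (B₁.domain : Set H₁)) (hd₂ : Dense (B₂.domain : Set H₂))
    (hc₁ : B₁.IsClosed) (hc₂ : B₂.IsClosed)
    (hs₁ : IsSymmetricOp B₁) (hs₂ : IsSymmetricOp B₂)
    (hi₁ : HasDefIndicesOneOne B₁) (hi₂ : HasDefIndicesOneOne B₂)
    (gp₁ gm₁ : H₁) (gp₂ gm₂ : H₂)
    (hgp₁ : gp₁ ∈ defSet B₁ Complex.I) (hgm₁ : gm₁ ∈ defSet B₁ (-Complex.I))
    (hgp₂ : gp₂ ∈ defSet B₂ Complex.I) (hgm₂ : gm₂ ∈ defSet B₂ (-Complex.I))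
    (hnp₁ : ‖gp₁‖ = 1) (hnm₁ : ‖gm₁‖ = 1) (hnp₂ : ‖gp₂‖ = 1) (hnm₂ : ‖gm₂‖ = 1)
    (α β : ℝ) (hα : α ∈ Set.Ico 0 Real.pi) (hβ : β ∈ Set.Ico 0 Real.pi)
    (f : WithLp 2 (H₁ × H₂))
    (hf : f = pairL2 ((Real.sin α : ℂ) • gp₁ - (Real.sin β : ℂ) • gm₁)
      ((Real.cos α : ℂ) • gp₂ - (Real.cos β : ℂ) • gm₂))
    (A : WithLp 2 (H₁ × H₂) →ₗ.[ℂ] WithLp 2 (H₁ × H₂))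
    (hA : A = ((prodOp B₁ B₂).adjoint).domRestrict
      (prodDomain B₁ B₂ ⊔ Submodule.span ℂ {f}))
    (Gp Gm : WithLp 2 (H₁ × H₂))
    (hGp : Gp = pairL2 ((Real.cos α : ℂ) • gp₁) (-(Real.sin α : ℂ) • gp₂))
    (hGm : Gm = pairL2 ((Real.cos β : ℂ) • gm₁) (-(Real.sin β : ℂ) • gm₂)) :
    IsSymmetricOp A ∧ HasDefIndicesOneOne A ∧
      defSet A Complex.I = {h | ∃ c : ℂ, h = c • Gp} ∧
      defSet A (-Complex.I) = {h | ∃ c : ℂ, h = c • Gm} ∧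
      ‖Gp‖ = 1 ∧ ‖Gm‖ = 1 :=
  statement1_general B₁ B₂ hd₁ hd₂ hs₁ hs₂ hi₁ hi₂ gp₁ gm₁ gp₂ gm₂ hgp₁ hgm₁ hgp₂ hgm₂ hnp₁ hnm₁
    hnp₂ hnm₂ α β f hf A hA Gp Gm hGp hGm
end
end

section
/- Let Ȧ₁ and Ȧ₂ be densely defined closed symmetric operators with deficiency indices (1,1) on complex Hilbert spaces H₁ and H₂, let g±ᵏ ∈ ker((Ȧₖ)* ∓ i) be unit vectors, let α ∈ [0, π), and let Ȧ be the restriction of (Ȧ₁ ⊕ Ȧ₂)* to Dom(Ȧ₁) ⊕ Dom(Ȧ₂) ∔ span{(sin α g₊¹ − sin α g₋¹) ⊕ (cos α g₊² − cos α g₋²)}, with deficiency vectors G₊ = cos α g₊¹ − sin α g₊² and G₋ = cos α g₋¹ − sin α g₋². Let A₁, A₂ be self-adjoint extensions of Ȧ₁, Ȧ₂ with g₊ᵏ − g₋ᵏ ∈ Dom(Aₖ). Then G₊ − G₋ ∈ Dom(A₁ ⊕ A₂), and for every z with Im z > 0 the Weyl–Titchmarsh functions satisfy M(z) = cos²α ·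 M₁(z) + sin²α · M₂(z), where M(z) = ⟨(( A₁⊕A₂)z + I)((A₁⊕A₂) − z)⁻¹ G₊, G₊⟩ and Mₖ(z) = ⟨(Aₖ z + I)(Aₖ − z)⁻¹ g₊ᵏ, g₊ᵏ⟩; equivalently, if u ∈ Dom(A₁⊕A₂) and uₖ ∈ Dom(Aₖ) are the unique solutions of ((A₁⊕A₂) − z)u = G₊ and (Aₖ − z)uₖ = g₊ᵏ, then M(z) = ⟨zG₊ + (1+z²)u, G₊⟩ and Mₖ(z) = ⟨z g₊ᵏ + (1+z²)uₖ, g₊ᵏ⟩. -/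
/-! A self-adjoint operator, and hence the direct sum `A₁ ⊕ A₂`, is symmetric, so `A - z` is
injective for nonreal `z`. The solution of `(A₁ ⊕ A₂ - z) u = G₊` with
`G₊ = cos α g₊¹ ⊕ (-sin α g₊²)` is therefore `cos α u₁ ⊕ (-sin α u₂)`, and the inner product
defining `M(z)` splits over the two summands with weights `cos²α` and `sin²α`. -/

noncomputable section

open Complex

variable {H H₁ H₂ : Type*}
  [NormedAddCommGroup H] [InnerProductSpace ℂ H] [CompleteSpace H]
  [NormedAddCommGroup H₁] [InnerProductSpace ℂ H₁] [CompleteSpace H₁]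
  [NormedAddCommGroup H₂] [InnerProductSpace ℂ H₂] [CompleteSpace H₂]

lemma IsSelfAdjointOp.isSymmetricOp {T : H →ₗ.[ℂ] H} (hT : IsSelfAdjointOp T) :
    IsSymmetricOp T := by
  have h := LinearPMap.adjoint_isFormalAdjoint hT.1
  rw [hT.2] at h
  exact fun x y => (h y x).symm

lemma pairL2_add {F₁ F₂ : Type*} [AddCommGroup F₁] [AddCommGroup F₂]
    (x₁ y₁ : F₁) (x₂ y₂ : F₂) :
    pairL2 x₁ x₂ + pairL2 y₁ y₂ = pairL2 (x₁ + y₁) (x₂ + y₂) :=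
  rfl

lemma pairL2_sub {F₁ F₂ : Type*} [AddCommGroup F₁] [AddCommGroup F₂]
    (x₁ y₁ : F₁) (x₂ y₂ : F₂) :
    pairL2 x₁ x₂ - pairL2 y₁ y₂ = pairL2 (x₁ - y₁) (x₂ - y₂) :=
  rfl

section Symmetric

variable {E E₁ E₂ : Type*}
  [NormedAddCommGroup E] [InnerProductSpace ℂ E]
  [NormedAddCommGroup E₁] [InnerProductSpace ℂ E₁]
  [NormedAddCommGroup E₂] [InnerProductSpace ℂ E₂]

lemma ip_smul_left (c : ℂ) (x y : E) : ip (c • x) y = c * ip x y := inner_smul_right _ _ _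

lemma ip_smul_right (c : ℂ) (x y : E) : ip x (c • y) = (starRingEnd ℂ) c * ip x y :=
  inner_smul_left _ _ _

lemma ip_prod (x y : WithLp 2 (E₁ × E₂)) : ip x y = ip x.fst y.fst + ip x.snd y.snd :=
  WithLp.prod_inner_apply _ _

lemma ip_pairL2 (x₁ y₁ : E₁) (x₂ y₂ : E₂) :
    ip (pairL2 x₁ x₂) (pairL2 y₁ y₂) = ip x₁ y₁ + ip x₂ y₂ :=
  ip_prod _ _

lemma IsSymmetricOp.eq_zero_of_apply_eq_smul {T : E →ₗ.[ℂ] E} (hT : IsSymmetricOp T) {z : ℂ}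
    (hz : z.im ≠ 0) {x : T.domain} (hx : T x = z • (x : E)) : (x : E) = 0 := by
  have hsym := hT x x
  rw [hx, ip_smul_left, ip_smul_right] at hsym
  have hz' : z ≠ (starRingEnd ℂ) z := fun h => hz (conj_eq_iff_im.mp h.symm)
  exact inner_self_eq_zero.mp ((mul_eq_mul_right_iff.mp hsym).resolve_left hz')

lemma IsSymmetricOp.eq_of_apply_sub_smul_eq {T : E →ₗ.[ℂ] E} (hT : IsSymmetricOp T) {z : ℂ}
    (hz : z.im ≠ 0) {x y : T.domain} (h : T x - z • (x : E) = T y - z • (y : E)) :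
    (x : E) = y := by
  refine sub_eq_zero.mp (hT.eq_zero_of_apply_eq_smul hz (x := x - y) ?_)
  rw [T.map_sub, Submodule.coe_sub, smul_sub]
  linear_combination (norm := abel) h

lemma LinearPMap.apply_smul_mk (T : E →ₗ.[ℂ] E) (c : ℂ) {x : E} (hx : x ∈ T.domain)
    (hcx : c • x ∈ T.domain) : T ⟨c • x, hcx⟩ = c • T ⟨x, hx⟩ :=
  T.map_smul c ⟨x, hx⟩

lemma smul_pairL2 (c : ℂ) (x₁ : E₁) (x₂ : E₂) : c • pairL2 x₁ x₂ = pairL2 (c • x₁) (c • x₂) :=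
  rfl

lemma ip_pairL2_resolvent (z a b : ℂ) (g₁ u₁ : E₁) (g₂ u₂ : E₂) :
    ip (z • pairL2 (a • g₁) (b • g₂) + (1 + z ^ 2) • pairL2 (a • u₁) (b • u₂))
        (pairL2 (a • g₁) (b • g₂)) =
      a * (starRingEnd ℂ) a * ip (z • g₁ + (1 + z ^ 2) • u₁) g₁ +
        b * (starRingEnd ℂ) b * ip (z • g₂ + (1 + z ^ 2) • u₂) g₂ := by
  rw [smul_pairL2, smul_pairL2, pairL2_add, ← smul_comm a z, ← smul_comm a (1 + z ^ 2),
    ← smul_comm b z, ← smul_comm b (1 + z ^ 2), ← smul_add, ← smul_add, ip_pairL2,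
    ip_smul_left, ip_smul_left, ip_smul_right, ip_smul_right]
  ring

variable {T₁ : E₁ →ₗ.[ℂ] E₁} {T₂ : E₂ →ₗ.[ℂ] E₂}

lemma prodOp_pairL2 {x : E₁} {y : E₂} (hx : x ∈ T₁.domain) (hy : y ∈ T₂.domain) :
    prodOp T₁ T₂ ⟨pairL2 x y, hx, hy⟩ = pairL2 (T₁ ⟨x, hx⟩) (T₂ ⟨y, hy⟩) :=
  rfl

lemma IsSymmetricOp.prod (h₁ : IsSymmetricOp T₁) (h₂ : IsSymmetricOp T₂) :
    IsSymmetricOp (prodOp T₁ T₂) := fun x y => by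
  rw [ip_prod, ip_prod]
  exact congrArg₂ (· + ·) (h₁ (fstD T₁ T₂ x) (fstD T₁ T₂ y)) (h₂ (sndD T₁ T₂ x) (sndD T₁ T₂ y))

lemma eq_pairL2_of_prodOp_sub_smul_eq (h₁ : IsSymmetricOp T₁) (h₂ : IsSymmetricOp T₂)
    {z : ℂ} (hz : z.im ≠ 0) (a b : ℂ) {g₁ u₁ : E₁} {g₂ u₂ : E₂} {u : WithLp 2 (E₁ × E₂)}
    (hu₁ : u₁ ∈ T₁.domain) (hu₂ : u₂ ∈ T₂.domain) (hu : u ∈ (prodOp T₁ T₂).domain)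
    (hres₁ : T₁ ⟨u₁, hu₁⟩ - z • u₁ = g₁) (hres₂ : T₂ ⟨u₂, hu₂⟩ - z • u₂ = g₂)
    (hres : prodOp T₁ T₂ ⟨u, hu⟩ - z • u = pairL2 (a • g₁) (b • g₂)) :
    u = pairL2 (a • u₁) (b • u₂) := by
  have hau₁ := T₁.domain.smul_mem a hu₁
  have hbu₂ := T₂.domain.smul_mem b hu₂
  refine (h₁.prod h₂).eq_of_apply_sub_smul_eq hz (x := ⟨u, hu⟩)
    (y := ⟨pairL2 (a • u₁) (b • u₂), hau₁, hbu₂⟩) ?_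
  rw [hres, prodOp_pairL2 hau₁ hbu₂, T₁.apply_smul_mk a hu₁, T₂.apply_smul_mk b hu₂,
    ← hres₁, ← hres₂, smul_pairL2, pairL2_sub]
  exact congrArg₂ pairL2 (by module) (by module)

end Symmetric

theorem statement4_general
    (gp₁ gm₁ : H₁) (gp₂ gm₂ : H₂)
    (α : ℝ)
    (Gp Gm : WithLp 2 (H₁ × H₂))
    (hGp : Gp = pairL2 ((Real.cos α : ℂ) • gp₁) (-(Real.sin α : ℂ) • gp₂))
    (hGm : Gm = pairL2 ((Real.cos α : ℂ) • gm₁) (-(Real.sin α : ℂ) • gm₂))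
    -- the self-adjoint reference extensions
    (A₁ : H₁ →ₗ.[ℂ] H₁) (A₂ : H₂ →ₗ.[ℂ] H₂)
    (hsa₁ : IsSelfAdjointOp A₁) (hsa₂ : IsSelfAdjointOp A₂)
    (hdom₁ : gp₁ - gm₁ ∈ A₁.domain) (hdom₂ : gp₂ - gm₂ ∈ A₂.domain) :
    Gp - Gm ∈ (prodOp A₁ A₂).domain ∧
    ∀ z : ℂ, 0 < z.im →
      ∀ (u : WithLp 2 (H₁ × H₂)) (hu : u ∈ (prodOp A₁ A₂).domain)
        (u₁ : H₁) (hu₁ : u₁ ∈ A₁.domain) (u₂ : H₂) (hu₂ : u₂ ∈ A₂.domain),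
        (prodOp A₁ A₂) ⟨u, hu⟩ - z • u = Gp →
        A₁ ⟨u₁, hu₁⟩ - z • u₁ = gp₁ →
        A₂ ⟨u₂, hu₂⟩ - z • u₂ = gp₂ →
        ip (z • Gp + (1 + z ^ 2) • u) Gp =
          (Real.cos α : ℂ) ^ 2 * ip (z • gp₁ + (1 + z ^ 2) • u₁) gp₁ +
          (Real.sin α : ℂ) ^ 2 * ip (z • gp₂ + (1 + z ^ 2) • u₂) gp₂ := by
  subst hGp hGm
  refine ⟨?_, fun z hz u hu u₁ hu₁ u₂ hu₂ hres hres₁ hres₂ => ?_⟩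
  · rw [pairL2_sub, ← smul_sub, ← smul_sub]
    exact ⟨A₁.domain.smul_mem _ hdom₁, A₂.domain.smul_mem _ hdom₂⟩
  · obtain rfl := eq_pairL2_of_prodOp_sub_smul_eq hsa₁.isSymmetricOp hsa₂.isSymmetricOp hz.ne'
      _ _ hu₁ hu₂ hu hres₁ hres₂ hres
    rw [ip_pairL2_resolvent, map_neg, conj_ofReal, conj_ofReal]
    ring

/-- **the Addition Theorem.** With `β = α`, the Weyl–Titchmarsh function of the
pair `(Ȧ, A₁ ⊕ A₂)` is the convex combination `M = cos²α M₁ + sin²α M₂`, where the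
Weyl–Titchmarsh values are expressed via the solutions of the resolvent equations. -/
theorem statement4
    (B₁ : H₁ →ₗ.[ℂ] H₁) (B₂ : H₂ →ₗ.[ℂ] H₂)
    (hd₁ : Dense (B₁.domain : Set H₁)) (hd₂ : Dense (B₂.domain : Set H₂))
    (hc₁ : B₁.IsClosed) (hc₂ : B₂.IsClosed)
    (hs₁ : IsSymmetricOp B₁) (hs₂ : IsSymmetricOp B₂)
    (hi₁ : HasDefIndicesOneOne B₁) (hi₂ : HasDefIndicesOneOne B₂)
    (gp₁ gm₁ : H₁) (gp₂ gm₂ : H₂)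
    (hgp₁ : gp₁ ∈ defSet B₁ Complex.I) (hgm₁ : gm₁ ∈ defSet B₁ (-Complex.I))
    (hgp₂ : gp₂ ∈ defSet B₂ Complex.I) (hgm₂ : gm₂ ∈ defSet B₂ (-Complex.I))
    (hnp₁ : ‖gp₁‖ = 1) (hnm₁ : ‖gm₁‖ = 1) (hnp₂ : ‖gp₂‖ = 1) (hnm₂ : ‖gm₂‖ = 1)
    (α : ℝ) (hα : α ∈ Set.Ico 0 Real.pi)
    (f : WithLp 2 (H₁ × H₂))
    (hf : f = pairL2 ((Real.sin α : ℂ) • gp₁ - (Real.sin α : ℂ) • gm₁)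
      ((Real.cos α : ℂ) • gp₂ - (Real.cos α : ℂ) • gm₂))
    (A : WithLp 2 (H₁ × H₂) →ₗ.[ℂ] WithLp 2 (H₁ × H₂))
    (hA : A = ((prodOp B₁ B₂).adjoint).domRestrict
      (prodDomain B₁ B₂ ⊔ Submodule.span ℂ {f}))
    (Gp Gm : WithLp 2 (H₁ × H₂))
    (hGp : Gp = pairL2 ((Real.cos α : ℂ) • gp₁) (-(Real.sin α : ℂ) • gp₂))
    (hGm : Gm = pairL2 ((Real.cos α : ℂ) • gm₁) (-(Real.sin α : ℂ) • gm₂))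
    -- the self-adjoint reference extensions
    (A₁ : H₁ →ₗ.[ℂ] H₁) (A₂ : H₂ →ₗ.[ℂ] H₂)
    (hsa₁ : IsSelfAdjointOp A₁) (hsa₂ : IsSelfAdjointOp A₂)
    (hext₁ : B₁ ≤ A₁) (hext₂ : B₂ ≤ A₂)
    (hdom₁ : gp₁ - gm₁ ∈ A₁.domain) (hdom₂ : gp₂ - gm₂ ∈ A₂.domain) :
    Gp - Gm ∈ (prodOp A₁ A₂).domain ∧
    ∀ z : ℂ, 0 < z.im →
      ∀ (u : WithLp 2 (H₁ × H₂)) (hu : u ∈ (prodOp A₁ A₂).domain)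
        (u₁ : H₁) (hu₁ : u₁ ∈ A₁.domain) (u₂ : H₂) (hu₂ : u₂ ∈ A₂.domain),
        (prodOp A₁ A₂) ⟨u, hu⟩ - z • u = Gp →
        A₁ ⟨u₁, hu₁⟩ - z • u₁ = gp₁ →
        A₂ ⟨u₂, hu₂⟩ - z • u₂ = gp₂ →
        ip (z • Gp + (1 + z ^ 2) • u) Gp =
          (Real.cos α : ℂ) ^ 2 * ip (z • gp₁ + (1 + z ^ 2) • u₁) gp₁ +
          (Real.sin α : ℂ) ^ 2 * ip (z • gp₂ + (1 + z ^ 2) • u₂) gp₂ :=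
  statement4_general gp₁ gm₁ gp₂ gm₂ α Gp Gm hGp hGm A₁ A₂ hsa₁ hsa₂ hdom₁ hdom₂
end
end

section
/- If s₁ ∈ 𝔠 and s₂ ∈ 𝔠, then the pointwise product s₁·s₂ belongs to 𝔠. -/
/-!
Since `‖s₁ z * s₂ z - θ‖ ≥ 1 - ‖s₁ z‖` on `ℂ₊`, it suffices that `‖z‖ * (1 - ‖s z‖) → ∞` in every
sector for `s ∈ 𝔠`. Otherwise this quantity stays below some `M` along a filter tending to `∞`
in a sector `ε ≤ arg z ≤ π - ε`, and by compactness `s` tends along it to a point `θ` of the unit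
circle. Passing to the limit in Julia's inequality (the Schwarz–Pick lemma for maps `ℂ₊ → 𝔻`)
gives `sin ε * Im z * ‖s z - θ‖ ≤ M` on all of `ℂ₊`, so `‖z‖ * ‖s z - θ‖ ≤ M / sin ε ^ 2` on the
sector, contradicting `s ∈ 𝔠` at `θ`.
-/

noncomputable section

/-- The open upper half-plane `ℂ₊`. -/
def upperHalf : Set ℂ := {z : ℂ | 0 < z.im}

/-- The sector `{z : ε ≤ arg z ≤ π − ε}`. -/
def sector (ε : ℝ) : Set ℂ := {z : ℂ | ε ≤ Complex.arg z ∧ Complex.arg z ≤ Real.pi - ε}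

/-- The filter describing `|z| → ∞` within the sector `{ε ≤ arg z ≤ π − ε}`. -/
def sectorAtInfty (ε : ℝ) : Filter ℂ :=
  (Filter.comap (fun z : ℂ => ‖z‖) Filter.atTop) ⊓ Filter.principal (sector ε)

/-- The class `𝔠` of Livšic functions: holomorphic maps `s : ℂ₊ → 𝔻` with `s(i) = 0` such that
for every unimodular `θ`, `|z|·|s(z) − θ| → ∞` as `|z| → ∞` in every sector
`{ε ≤ arg z ≤ π − ε}`, `ε > 0`. -/
def MemLivsicClass (s : ℂ → ℂ) : Prop :=
  DifferentiableOn ℂ s upperHalf ∧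
  (∀ z ∈ upperHalf, ‖s z‖ < 1) ∧
  s Complex.I = 0 ∧
  ∀ θ : ℂ, ‖θ‖ = 1 → ∀ ε : ℝ, 0 < ε →
    Filter.Tendsto (fun z => ‖z‖ * ‖s z - θ‖) (sectorAtInfty ε)
      Filter.atTop

/-- The class `𝔖` of characteristic functions: the functions of the form
`S(z) = (s(z) − κ)/(κ̄ s(z) − 1)` on `ℂ₊` with `s ∈ 𝔠` and `κ ∈ 𝔻`. -/
def MemCharClass (S : ℂ → ℂ) : Prop :=
  ∃ (s : ℂ → ℂ) (κ : ℂ), MemLivsicClass s ∧ ‖κ‖ < 1 ∧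
    ∀ z ∈ upperHalf, S z = (s z - κ) / ((starRingEnd ℂ) κ * s z - 1)

open Complex Filter Metric Set ComplexConjugate Topology

lemma isOpen_upperHalf : IsOpen upperHalf := isOpen_lt continuous_const continuous_im

lemma norm_lt_norm_of_normSq_lt {x y : ℂ} (h : normSq x < normSq y) : ‖x‖ < ‖y‖ := by
  rw [norm_def, norm_def]
  exact Real.sqrt_lt_sqrt (normSq_nonneg x) h

lemma normSq_lt_one {v : ℂ} (hv : ‖v‖ < 1) : normSq v < 1 := by
  rw [normSq_eq_norm_sq]
  nlinarith [norm_nonneg v]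

section DiskAutomorphism

lemma normSq_one_sub_conj_mul_sub_normSq_sub (v b : ℂ) :
    normSq (1 - conj b * v) - normSq (v - b) = (1 - normSq v) * (1 - normSq b) := by
  simp only [normSq_apply, sub_re, sub_im, mul_re, mul_im, conj_re, conj_im, one_re, one_im]
  ring

variable {b v : ℂ}

lemma one_sub_conj_mul_ne_zero (hb : ‖b‖ < 1) (hv : ‖v‖ < 1) : 1 - conj b * v ≠ 0 := by
  rw [sub_ne_zero]
  refine fun h => (norm_one (α := ℂ)).not_lt ?_
  rw [h, norm_mul, norm_conj]
  nlinarith [norm_nonneg b, norm_nonneg v]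

lemma norm_sub_lt_norm_one_sub_conj_mul (hb : ‖b‖ < 1) (hv : ‖v‖ < 1) :
    ‖v - b‖ < ‖1 - conj b * v‖ := by
  refine norm_lt_norm_of_normSq_lt (sub_pos.mp ?_)
  rw [normSq_one_sub_conj_mul_sub_normSq_sub]
  exact mul_pos (sub_pos.mpr (normSq_lt_one hv)) (sub_pos.mpr (normSq_lt_one hb))

end DiskAutomorphism

section Cayley

/-- A Cayley transform of the unit disk onto `ℂ₊` sending `0` to `w`; its inverse is
`z ↦ (z - w) / (z - conj w)`. -/
def cayley (w u : ℂ) : ℂ := (w - conj w * u) / (1 - u)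

variable {w z u : ℂ}

lemma one_sub_ne_zero_of_norm_lt_one (hu : ‖u‖ < 1) : 1 - u ≠ 0 := by
  rw [sub_ne_zero]
  rintro rfl
  simp at hu

lemma cayley_mem_upperHalf (hw : w ∈ upperHalf) (hu : ‖u‖ < 1) : cayley w u ∈ upperHalf := by
  have him : (cayley w u).im = w.im * (1 - normSq u) / normSq (1 - u) := by
    rw [cayley, div_im, div_sub_div_same]
    congr 1
    simp only [normSq_apply, sub_re, sub_im, mul_re, mul_im, conj_re, conj_im, one_re, one_im]
    ring
  show 0 < (cayley w u).im
  rw [him]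
  exact div_pos (mul_pos hw (sub_pos.mpr (normSq_lt_one hu)))
    (normSq_pos.mpr (one_sub_ne_zero_of_norm_lt_one hu))

lemma differentiableAt_cayley (hu : ‖u‖ < 1) : DifferentiableAt ℂ (cayley w) u :=
  (by fun_prop : DifferentiableAt ℂ (fun u => w - conj w * u) u).div (by fun_prop)
    (one_sub_ne_zero_of_norm_lt_one hu)

lemma normSq_sub_conj_sub_normSq_sub (z w : ℂ) :
    normSq (z - conj w) - normSq (z - w) = 4 * z.im * w.im := by
  simp only [normSq_apply, sub_re, sub_im, conj_re, conj_im]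
  ring

lemma sub_conj_ne_zero (hz : z ∈ upperHalf) (hw : w ∈ upperHalf) : z - conj w ≠ 0 := by
  refine fun h => (add_pos (show 0 < z.im from hz) (show 0 < w.im from hw)).ne' ?_
  simpa using congrArg im h

lemma norm_sub_div_sub_conj_lt_one (hz : z ∈ upperHalf) (hw : w ∈ upperHalf) :
    ‖(z - w) / (z - conj w)‖ < 1 := by
  rw [norm_div, div_lt_one (norm_pos_iff.mpr (sub_conj_ne_zero hz hw))]
  refine norm_lt_norm_of_normSq_lt (sub_pos.mp ?_)
  rw [normSq_sub_conj_sub_normSq_sub]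
  exact mul_pos (mul_pos four_pos hz) hw

lemma cayley_sub_div_sub_conj (hz : z ∈ upperHalf) (hw : w ∈ upperHalf) :
    cayley w ((z - w) / (z - conj w)) = z := by
  have hzw := sub_conj_ne_zero hz hw
  have hww := sub_conj_ne_zero hw hw
  rw [cayley, div_eq_iff (one_sub_ne_zero_of_norm_lt_one (norm_sub_div_sub_conj_lt_one hz hw))]
  field_simp
  ring

end Cayley

theorem schwarz_pick_upperHalf {f : ℂ → ℂ} (hd : DifferentiableOn ℂ f upperHalf)
    (hb : ∀ z ∈ upperHalf, ‖f z‖ < 1) {z w : ℂ} (hz : z ∈ upperHalf) (hw : w ∈ upperHalf) :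
    ‖f z - f w‖ * ‖z - conj w‖ ≤ ‖1 - conj (f w) * f z‖ * ‖z - w‖ := by
  -- `f` transported to a self-map of the disk fixing `0`, so that the Schwarz lemma applies
  set g : ℂ → ℂ := fun u => (f (cayley w u) - f w) / (1 - conj (f w) * f (cayley w u))
  have hball : ∀ u ∈ ball (0 : ℂ) 1, ‖u‖ < 1 := fun u hu => mem_ball_zero_iff.mp hu
  have hg_maps : MapsTo g (ball 0 1) (closedBall 0 1) := by
    intro u hu
    have hv := hb _ (cayley_mem_upperHalf hw (hball u hu))
    rw [mem_closedBall_zero_iff, norm_div,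
      div_le_one (norm_pos_iff.mpr (one_sub_conj_mul_ne_zero (hb w hw) hv))]
    exact (norm_sub_lt_norm_one_sub_conj_mul (hb w hw) hv).le
  have hg_diff : DifferentiableOn ℂ g (ball 0 1) := by
    intro u hu
    have hcu := cayley_mem_upperHalf hw (hball u hu)
    have hF : DifferentiableAt ℂ (fun u => f (cayley w u)) u :=
      (hd.differentiableAt (isOpen_upperHalf.mem_nhds hcu)).comp u
        (differentiableAt_cayley (hball u hu))
    exact ((hF.sub_const _).div ((hF.const_mul _).const_sub _)
      (one_sub_conj_mul_ne_zero (hb w hw) (hb _ hcu))).differentiableWithinAt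
  have hg0 : g 0 = 0 := by simp [g, cayley]
  have hschwarz := norm_le_norm_of_mapsTo_ball hg_diff hg_maps hg0
    (norm_sub_div_sub_conj_lt_one hz hw)
  simp only [g, cayley_sub_div_sub_conj hz hw, norm_div] at hschwarz
  rwa [div_le_div_iff₀ (norm_pos_iff.mpr (one_sub_conj_mul_ne_zero (hb w hw) (hb z hz)))
    (norm_pos_iff.mpr (sub_conj_ne_zero hz hw)), mul_comm ‖z - w‖] at hschwarz

section UnitCircle

variable {θ : ℂ} (hθ : ‖θ‖ = 1)
include hθ

lemma normSq_one_sub_conj_mul_of_norm_eq_one (v : ℂ) :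
    normSq (1 - conj θ * v) = ‖v - θ‖ ^ 2 := by
  have hθθ : conj θ * θ = 1 := by
    rw [← normSq_eq_conj_mul_self, normSq_eq_norm_sq, hθ, one_pow, ofReal_one]
  have h : 1 - conj θ * v = conj θ * (θ - v) := by rw [mul_sub, hθθ]
  rw [h, normSq_mul, normSq_conj, normSq_eq_norm_sq θ, hθ, one_pow, one_mul, ← Complex.sq_norm,
    norm_sub_rev]

lemma one_sub_normSq_le_of_norm_eq_one {v : ℂ} (hv : ‖v‖ ≤ 1) : 1 - normSq v ≤ 2 * ‖v - θ‖ := by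
  have h := norm_sub_norm_le θ v
  rw [hθ, norm_sub_rev] at h
  rw [normSq_eq_norm_sq]
  nlinarith [norm_nonneg v]

end UnitCircle

lemma norm_eq_one_of_tendsto {f : ℂ → ℂ} {F : Filter ℂ} [F.NeBot] {θ : ℂ} {M : ℝ}
    (hF : ∀ᶠ w in F, ‖f w‖ < 1 ∧ ‖w‖ * (1 - ‖f w‖) ≤ M)
    (hnorm : Tendsto (fun w => ‖w‖) F atTop) (hθ : Tendsto f F (𝓝 θ)) : ‖θ‖ = 1 := by
  refine le_antisymm (le_of_tendsto hθ.norm (hF.mono fun w hw => hw.1.le)) ?_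
  have hM : Tendsto (fun w => 1 - M / ‖w‖) F (𝓝 (1 - 0)) :=
    tendsto_const_nhds.sub (tendsto_const_nhds.div_atTop hnorm)
  refine (sub_zero (1 : ℝ)) ▸ le_of_tendsto_of_tendsto hM hθ.norm ?_
  filter_upwards [hF, hnorm.eventually_gt_atTop 0] with w hwM hw
  rw [sub_le_comm, le_div_iff₀ hw]
  linarith [hwM.2]

section Julia

variable {f : ℂ → ℂ} (hd : DifferentiableOn ℂ f upperHalf) (hb : ∀ z ∈ upperHalf, ‖f z‖ < 1)
include hd hb

theorem julia_inequality {z w : ℂ} (hz : z ∈ upperHalf) (hw : w ∈ upperHalf) :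
    normSq (1 - conj (f w) * f z) * (4 * z.im * w.im) ≤
      (1 - normSq (f z)) * (1 - normSq (f w)) * normSq (z - conj w) := by
  have hsp := pow_le_pow_left₀ (by positivity) (schwarz_pick_upperHalf hd hb hz hw) 2
  simp only [mul_pow, Complex.sq_norm] at hsp
  rw [← normSq_one_sub_conj_mul_sub_normSq_sub, ← normSq_sub_conj_sub_normSq_sub]
  nlinarith [hsp]

/-- Julia's inequality normalized so that its right-hand side has a limit as `‖w‖ → ∞`. -/
lemma julia_inequality_of_norm_mul_one_sub_norm_le {z w : ℂ} {c M : ℝ} (hz : z ∈ upperHalf)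
    (hw : w ∈ upperHalf) (hcw : c * ‖w‖ ≤ w.im) (hM : ‖w‖ * (1 - ‖f w‖) ≤ M) :
    normSq (1 - conj (f w) * f z) * (4 * c * z.im) ≤
      2 * M * (1 - normSq (f z)) * (‖z‖ / ‖w‖ + 1) ^ 2 := by
  have hw0 : 0 < ‖w‖ := norm_pos_iff.mpr fun h => (show 0 < w.im from hw).ne' (by simp [h])
  have hzim : 0 < z.im := hz
  have hfz : 0 ≤ 1 - normSq (f z) := sub_nonneg.mpr (normSq_lt_one (hb z hz)).le
  have hfw : 0 ≤ 1 - normSq (f w) := sub_nonneg.mpr (normSq_lt_one (hb w hw)).le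
  have hM' : ‖w‖ * (1 - normSq (f w)) ≤ 2 * M := by
    have h1 : 0 ≤ 1 - ‖f w‖ := by linarith [hb w hw]
    rw [normSq_eq_norm_sq]
    nlinarith [mul_le_mul_of_nonneg_right hM (by positivity : (0 : ℝ) ≤ 1 + ‖f w‖),
      mul_nonneg hw0.le h1, norm_nonneg (f w)]
  have hdist : normSq (z - conj w) ≤ (‖z‖ + ‖w‖) ^ 2 := by
    rw [← Complex.sq_norm]
    gcongr
    simpa using norm_sub_le z (conj w)
  have hJ := julia_inequality hd hb hz hw
  set X := normSq (1 - conj (f w) * f z)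
  have hX : 0 ≤ X := normSq_nonneg _
  rw [div_add_one hw0.ne', div_pow, mul_div_assoc', le_div_iff₀ (by positivity)]
  calc X * (4 * c * z.im) * ‖w‖ ^ 2 = X * (4 * z.im) * (c * ‖w‖) * ‖w‖ := by ring
    _ ≤ X * (4 * z.im) * w.im * ‖w‖ := by gcongr
    _ ≤ (1 - normSq (f z)) * (1 - normSq (f w)) * normSq (z - conj w) * ‖w‖ := by
        rw [mul_assoc X]; exact mul_le_mul_of_nonneg_right hJ hw0.le
    _ = (1 - normSq (f z)) * normSq (z - conj w) * (‖w‖ * (1 - normSq (f w))) := by ring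
    _ ≤ (1 - normSq (f z)) * (‖z‖ + ‖w‖) ^ 2 * (2 * M) := by gcongr
    _ = 2 * M * (1 - normSq (f z)) * (‖z‖ + ‖w‖) ^ 2 := by ring

theorem im_mul_norm_sub_le_of_tendsto {F : Filter ℂ} [F.NeBot] {θ : ℂ} {c M : ℝ}
    (hθ1 : ‖θ‖ = 1) (hF : ∀ᶠ w in F, w ∈ upperHalf ∧ c * ‖w‖ ≤ w.im ∧ ‖w‖ * (1 - ‖f w‖) ≤ M)
    (hnorm : Tendsto (fun w => ‖w‖) F atTop) (hθ : Tendsto f F (𝓝 θ)) {z : ℂ}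
    (hz : z ∈ upperHalf) : c * z.im * ‖f z - θ‖ ≤ M := by
  have hM : 0 ≤ M := by
    obtain ⟨w, hw, -, hwM⟩ := hF.exists
    nlinarith [hb w hw, norm_nonneg w]
  have hlim : ‖f z - θ‖ ^ 2 * (4 * c * z.im) ≤ 2 * M * (1 - normSq (f z)) := by
    rw [← normSq_one_sub_conj_mul_of_norm_eq_one hθ1]
    have hcont : Continuous fun v => normSq (1 - conj v * f z) * (4 * c * z.im) := by fun_prop
    refine le_of_tendsto_of_tendsto ((hcont.tendsto θ).comp hθ) ?_
      (hF.mono fun w ⟨hw, hcw, hwM⟩ =>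
        julia_inequality_of_norm_mul_one_sub_norm_le hd hb hz hw hcw hwM)
    simpa using (tendsto_const_nhds (x := 2 * M * (1 - normSq (f z)))).mul
      (((tendsto_const_nhds (x := ‖z‖).div_atTop hnorm).add
        (tendsto_const_nhds (x := (1 : ℝ)))).pow 2)
  have hfz := one_sub_normSq_le_of_norm_eq_one hθ1 (hb z hz).le
  rcases (norm_nonneg (f z - θ)).eq_or_lt with hD | hD
  · rw [← hD, mul_zero]
    exact hM
  · refine le_of_mul_le_mul_right ?_ hD
    nlinarith

end Julia

section Sector

variable {ε : ℝ} {z : ℂ}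

lemma eventually_mem_sector : ∀ᶠ z in sectorAtInfty ε, z ∈ sector ε :=
  mem_inf_of_right (mem_principal_self _)

lemma tendsto_norm_sectorAtInfty : Tendsto (fun z => ‖z‖) (sectorAtInfty ε) atTop :=
  tendsto_comap.mono_left inf_le_left

lemma Real.sin_le_sin_of_le_of_le_pi_sub {x : ℝ} (hε : 0 ≤ ε) (h₁ : ε ≤ x)
    (h₂ : x ≤ Real.pi - ε) : Real.sin ε ≤ Real.sin x := by
  rcases le_total x (Real.pi / 2) with hx | hx
  · exact Real.sin_le_sin_of_le_of_le_pi_div_two (by linarith [Real.pi_pos]) hx h₁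
  · rw [← Real.sin_pi_sub x]
    exact Real.sin_le_sin_of_le_of_le_pi_div_two (by linarith [Real.pi_pos]) (by linarith)
      (by linarith)

lemma sin_mul_norm_le_im_of_mem_sector (hε : 0 ≤ ε) (hz : z ∈ sector ε) :
    Real.sin ε * ‖z‖ ≤ z.im := by
  rw [← norm_mul_sin_arg, mul_comm]
  gcongr
  exact Real.sin_le_sin_of_le_of_le_pi_sub hε hz.1 hz.2

lemma sin_pos_of_mem_sector (hε : 0 < ε) (hz : z ∈ sector ε) : 0 < Real.sin ε :=
  Real.sin_pos_of_pos_of_lt_pi hε (by linarith [hz.1.trans hz.2])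

lemma mem_upperHalf_of_mem_sector (hε : 0 < ε) (hz : z ∈ sector ε) : z ∈ upperHalf := by
  have hz0 : z ≠ 0 := by
    rintro rfl
    exact (hz.1.trans_lt' hε).ne' arg_zero
  exact (mul_pos (sin_pos_of_mem_sector hε hz) (norm_pos_iff.mpr hz0)).trans_le
    (sin_mul_norm_le_im_of_mem_sector hε.le hz)

end Sector

lemma one_sub_norm_le_norm_mul_sub {a b θ : ℂ} (hb : ‖b‖ ≤ 1) (hθ : ‖θ‖ = 1) :
    1 - ‖a‖ ≤ ‖a * b - θ‖ := by
  have h := norm_sub_norm_le θ (a * b)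
  rw [hθ, norm_sub_rev, norm_mul] at h
  nlinarith [norm_nonneg a]

theorem MemLivsicClass.tendsto_norm_mul_one_sub_norm {s : ℂ → ℂ} (hs : MemLivsicClass s) {ε : ℝ}
    (hε : 0 < ε) : Tendsto (fun z => ‖z‖ * (1 - ‖s z‖)) (sectorAtInfty ε) atTop := by
  obtain ⟨hd, hb, -, hθ⟩ := hs
  by_contra hne
  obtain ⟨M, hM⟩ : ∃ M, ∃ᶠ z in sectorAtInfty ε, ‖z‖ * (1 - ‖s z‖) < M := by
    simpa [Filter.tendsto_atTop, not_eventually] using hne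
  have : (sectorAtInfty ε ⊓ 𝓟 {z | ‖z‖ * (1 - ‖s z‖) < M}).NeBot := frequently_iff_neBot.mp hM
  set U := Ultrafilter.of (sectorAtInfty ε ⊓ 𝓟 {z | ‖z‖ * (1 - ‖s z‖) < M})
  have hUsector : (U : Filter ℂ) ≤ sectorAtInfty ε := (Ultrafilter.of_le _).trans inf_le_left
  have hU : ∀ᶠ z in U, z ∈ sector ε ∧ ‖z‖ * (1 - ‖s z‖) ≤ M :=
    (eventually_mem_sector.filter_mono hUsector).and <|
      (Eventually.filter_mono ((Ultrafilter.of_le _).trans inf_le_right)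
        (mem_principal_self _)).mono fun _ h => h.le
  have hUnorm : Tendsto (fun z => ‖z‖) U atTop := tendsto_norm_sectorAtInfty.mono_left hUsector
  have hUupper : ∀ᶠ z in U, z ∈ upperHalf := hU.mono fun z hz => mem_upperHalf_of_mem_sector hε hz.1
  obtain ⟨θ, -, hsθ⟩ := (isCompact_closedBall (0 : ℂ) 1).ultrafilter_le_nhds (U.map s)
    (le_principal_iff.mpr <| hUupper.mono fun z hz => mem_closedBall_zero_iff.mpr (hb z hz).le)
  have hθ1 : ‖θ‖ = 1 :=
    norm_eq_one_of_tendsto ((hUupper.and hU).mono fun z hz => ⟨hb z hz.1, hz.2.2⟩) hUnorm hsθ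
  obtain ⟨z₀, hz₀, -⟩ := hU.exists
  have hsin := sin_pos_of_mem_sector hε hz₀
  have hbounded : ∀ z ∈ sector ε, ‖z‖ * ‖s z - θ‖ ≤ M / Real.sin ε ^ 2 := by
    intro z hz
    have hJ := im_mul_norm_sub_le_of_tendsto hd hb hθ1
      ((hUupper.and hU).mono fun w hw =>
        ⟨hw.1, sin_mul_norm_le_im_of_mem_sector hε.le hw.2.1, hw.2.2⟩)
      hUnorm hsθ (mem_upperHalf_of_mem_sector hε hz)
    have him := sin_mul_norm_le_im_of_mem_sector hε.le hz
    rw [le_div_iff₀ (by positivity)]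
    nlinarith [mul_le_mul_of_nonneg_left him (by positivity : 0 ≤ Real.sin ε * ‖s z - θ‖)]
  obtain ⟨z, hz_large, hz⟩ :=
    (((hθ θ hθ1 ε hε).mono_left hUsector).eventually_gt_atTop _).and hU |>.exists
  exact (hbounded z hz.1).not_gt hz_large

/-- The class `𝔠` is closed under pointwise multiplication. -/
theorem statement15 (s₁ s₂ : ℂ → ℂ) (h₁ : MemLivsicClass s₁) (h₂ : MemLivsicClass s₂) :
    MemLivsicClass (fun z => s₁ z * s₂ z) := by
  refine ⟨h₁.1.mul h₂.1, fun z hz => ?_, by simp [h₁.2.2.1], fun θ hθ ε hε => ?_⟩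
  · rw [norm_mul]
    exact mul_lt_one_of_nonneg_of_lt_one_left (norm_nonneg _) (h₁.2.1 z hz) (h₂.2.1 z hz).le
  · refine tendsto_atTop_mono' _ ?_ (h₁.tendsto_norm_mul_one_sub_norm hε)
    filter_upwards [eventually_mem_sector] with z hz
    gcongr
    exact one_sub_norm_le_norm_mul_sub (h₂.2.1 z (mem_upperHalf_of_mem_sector hε hz)).le hθ
end
end
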